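/- arXiv:1612.02591 — 9 statements merged into one kernel-verified Lean document; each statement's English description precedes it below -/
import Mathlib

section
/- Let C be an additive category, f₁ : X₁ → Y₁ and f₂ : X₂ → Y₂ two morphisms, and C an object. Then the direct sum morphism f₁ ⊕ f₂ : X₁ ⊕ X₂ → Y₁ ⊕ Y₂ is right C-determined if and only if both f₁ and f₂ are right C-determined. -/
open CategoryTheory CategoryTheory.Limits

universe v u u'

variable {C : Type u} [Category.{v} C]

/-- `f` is right `Cd`-determined. -/
def RightDetermined {X Y : C} (f : X ⟶ Y) (Cd : C) : Prop :=
  ∀ ⦃T : C⦄ (g : T ⟶ Y), (∀ h : Cd ⟶ T, ∃ s : Cd ⟶ X, h ≫ g = s ≫ f) →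
    ∃ t : T ⟶ X, g = t ≫ f

def LeftDetermined {X Y : C} (f : X ⟶ Y) (Kd : C) : Prop :=
  ∀ ⦃T : C⦄ (g : X ⟶ T), (∀ h : T ⟶ Kd, ∃ s : Y ⟶ Kd, g ≫ h = f ≫ s) →
    ∃ t : Y ⟶ T, g = f ≫ t

def IsSummand (Z X : C) : Prop := ∃ (s : Z ⟶ X) (r : X ⟶ Z), s ≫ r = 𝟙 Z

section Preadd
variable [Preadditive C]

/-- membership in the radical of the category, via the Jacobson radical of `End`. -/
def radHom {T Z : C} (h : T ⟶ Z) : Prop :=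
  ∀ u : Z ⟶ T, (u ≫ h : CategoryTheory.End Z) ∈ Ideal.jacobson (⊥ : Ideal (CategoryTheory.End Z))

def AlmostFactorsThrough {X Y Z : C} (g : Z ⟶ Y) (f : X ⟶ Y) : Prop :=
  ¬ (∃ s : Z ⟶ X, g = s ≫ f) ∧
    ∀ ⦃T : C⦄ (h : T ⟶ Z), radHom h → ∃ s : T ⟶ X, h ≫ g = s ≫ f

def Indec (Z : C) : Prop :=
  ¬ Limits.IsZero Z ∧ ∀ e : Z ⟶ Z, e ≫ e = e → e = 0 ∨ e = 𝟙 Z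

end Preadd

def RightAlmostSplit {E Y : C} (d : E ⟶ Y) : Prop :=
  ¬ (∃ s : Y ⟶ E, s ≫ d = 𝟙 Y) ∧
    ∀ ⦃T : C⦄ (g : T ⟶ Y), ¬ (∃ s : Y ⟶ T, s ≫ g = 𝟙 Y) → ∃ t : T ⟶ E, t ≫ d = g

def LeftAlmostSplit {X E : C} (i : X ⟶ E) : Prop :=
  ¬ (∃ r : E ⟶ X, i ≫ r = 𝟙 X) ∧
    ∀ ⦃T : C⦄ (g : X ⟶ T), ¬ (∃ r : T ⟶ X, g ≫ r = 𝟙 X) → ∃ t : E ⟶ T, i ≫ t = g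

def RightMinimal {X Y : C} (f : X ⟶ Y) : Prop :=
  ∀ g : X ⟶ X, g ≫ f = f → IsIso g

def RightEquiv {X X' Y : C} (f : X ⟶ Y) (f' : X' ⟶ Y) : Prop :=
  (∃ u : X ⟶ X', f = u ≫ f') ∧ (∃ v : X' ⟶ X, f' = v ≫ f)

/-- A Quillen exact structure on an additive category. -/
class ExactStruct (C : Type u) [Category.{v} C] [Preadditive C] [HasZeroObject C]
    [HasBinaryBiproducts C] where
  IsConflation : ∀ {X E Y : C}, (X ⟶ E) → (E ⟶ Y) → Prop
  comp_zero : ∀ {X E Y : C} {i : X ⟶ E} {d : E ⟶ Y}, IsConflation i d → i ≫ d = 0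
  isKernel : ∀ {X E Y : C} {i : X ⟶ E} {d : E ⟶ Y}, IsConflation i d →
    ∀ {T : C} (g : T ⟶ E), g ≫ d = 0 → ∃! t : T ⟶ X, t ≫ i = g
  isCokernel : ∀ {X E Y : C} {i : X ⟶ E} {d : E ⟶ Y}, IsConflation i d →
    ∀ {T : C} (g : E ⟶ T), i ≫ g = 0 → ∃! t : Y ⟶ T, d ≫ t = g
  split_conflation : ∀ X Y : C, IsConflation (biprod.inl : X ⟶ X ⊞ Y) (biprod.snd : X ⊞ Y ⟶ Y)
  defl_comp : ∀ {X Y Z : C} (d : X ⟶ Y) (d' : Y ⟶ Z),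
    (∃ (K : C) (i : K ⟶ X), IsConflation i d) → (∃ (K : C) (i : K ⟶ Y), IsConflation i d') →
    ∃ (K : C) (i : K ⟶ X), IsConflation i (d ≫ d')
  infl_comp : ∀ {X Y Z : C} (i : X ⟶ Y) (i' : Y ⟶ Z),
    (∃ (W : C) (d : Y ⟶ W), IsConflation i d) → (∃ (W : C) (d : Z ⟶ W), IsConflation i' d) →
    ∃ (W : C) (d : Z ⟶ W), IsConflation (i ≫ i') d
  pullback_defl : ∀ {X Y Z : C} (d : X ⟶ Y) (g : Z ⟶ Y),
    (∃ (K : C) (i : K ⟶ X), IsConflation i d) →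
    ∃ (E : C) (g' : E ⟶ X) (d' : E ⟶ Z), IsPullback g' d' d g ∧
      ∃ (K : C) (i : K ⟶ E), IsConflation i d'
  pushout_infl : ∀ {X Y Z : C} (i : X ⟶ Y) (g : X ⟶ Z),
    (∃ (W : C) (d : Y ⟶ W), IsConflation i d) →
    ∃ (E : C) (i' : Z ⟶ E) (g' : Y ⟶ E), IsPushout i g g' i' ∧
      ∃ (W : C) (d : E ⟶ W), IsConflation i' d

section Exact
variable [Preadditive C] [HasZeroObject C] [HasBinaryBiproducts C] [ExactStruct C]

def IsDeflation {X Y : C} (d : X ⟶ Y) : Prop :=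
  ∃ (K : C) (i : K ⟶ X), ExactStruct.IsConflation i d

def IsInflation {X Y : C} (i : X ⟶ Y) : Prop :=
  ∃ (Z : C) (d : Y ⟶ Z), ExactStruct.IsConflation i d

/-- projectively trivial morphisms: those factoring through every deflation onto the target. -/
def ProjTrivial {X Y : C} (f : X ⟶ Y) : Prop :=
  ∀ ⦃E : C⦄ (d : E ⟶ Y), IsDeflation d → ∃ g : X ⟶ E, f = g ≫ d

/-- injectively trivial morphisms: those factoring through every inflation from the source. -/
def InjTrivial {X Y : C} (f : X ⟶ Y) : Prop :=
  ∀ ⦃E : C⦄ (i : X ⟶ E), IsInflation i → ∃ g : E ⟶ Y, f = i ≫ g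

/-- `f` factors through `α` in the projectively stable category. -/
def StablyFactors {T X Y : C} (f : T ⟶ Y) (α : X ⟶ Y) : Prop :=
  ∃ g : T ⟶ X, ProjTrivial (f - g ≫ α)

/-- `α` is right `Cd`-determined in the projectively stable category. -/
def RightDeterminedStable {X Y : C} (α : X ⟶ Y) (Cd : C) : Prop :=
  ∀ ⦃T : C⦄ (g : T ⟶ Y), (∀ h : Cd ⟶ T, StablyFactors (h ≫ g) α) → StablyFactors g α

/-- `X ≅ Y` in the projectively stable category. -/
def StablyIso (X Y : C) : Prop :=
  ∃ (f : X ⟶ Y) (g : Y ⟶ X), ProjTrivial (f ≫ g - 𝟙 X) ∧ ProjTrivial (g ≫ f - 𝟙 Y)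

def ProjObj (P : C) : Prop :=
  ∀ ⦃E : C⦄ (d : E ⟶ P), IsDeflation d → ∃ s : P ⟶ E, s ≫ d = 𝟙 P

def InjObj (I : C) : Prop :=
  ∀ ⦃E : C⦄ (i : I ⟶ E), IsInflation i → ∃ r : E ⟶ I, i ≫ r = 𝟙 I

def AlmostSplitConflation {X E Y : C} (i : X ⟶ E) (d : E ⟶ Y) : Prop :=
  ExactStruct.IsConflation i d ∧ LeftAlmostSplit i ∧ RightAlmostSplit d

/-- membership in `𝒞_l`: every indecomposable direct summand is injective or is the first
term of an almost split conflation. -/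
def MemCl (K : C) : Prop :=
  ∀ Z : C, IsSummand Z K → Indec Z →
    InjObj Z ∨ ∃ (E W : C) (i : Z ⟶ E) (d : E ⟶ W), AlmostSplitConflation i d

/-- membership in `𝒞_r`: every indecomposable direct summand is projective or is the third
term of an almost split conflation. -/
def MemCr (X : C) : Prop :=
  ∀ Z : C, IsSummand Z X → Indec Z →
    ProjObj Z ∨ ∃ (K E : C) (i : K ⟶ E) (d : E ⟶ Z), AlmostSplitConflation i d

end Exact

/-- Krull–Schmidt: every object is a finite biproduct of objects with local endomorphism ring. -/
class KrullSchmidtCat (C : Type u) [Category.{v} C] [Preadditive C]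
    [HasFiniteBiproducts C] : Prop where
  decomp : ∀ X : C, ∃ (n : ℕ) (f : Fin n → C),
    (∀ i, IsLocalRing (CategoryTheory.End (f i))) ∧ Nonempty (X ≅ ⨁ f)

/-! `f₁` and `f₂` are retracts of `f₁ ⊕ f₂` in the arrow category, and right `Cd`-determination
passes to retracts. Conversely, a morphism into `Y₁ ⊞ Y₂` factors through `f₁ ⊕ f₂` exactly when
its two components factor through `f₁` and `f₂`, so the defining test splits componentwise. -/

theorem RightDetermined.of_retractArrow {X Y X' Y' : C} {f : X ⟶ Y} {f' : X' ⟶ Y'}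
    (e : RetractArrow f' f) {Cd : C} (hf : RightDetermined f Cd) : RightDetermined f' Cd := by
  intro T g hg
  obtain ⟨t, ht⟩ := hf (g ≫ e.i.right) fun h => by
    obtain ⟨s, hs⟩ := hg h
    exact ⟨s ≫ e.i.left, by rw [reassoc_of% hs, Category.assoc, e.i_w]⟩
  refine ⟨t ≫ e.r.left, ?_⟩
  calc g = g ≫ e.i.right ≫ e.r.right := by simp
    _ = (t ≫ e.r.left) ≫ f' := by rw [reassoc_of% ht, Category.assoc, e.r_w]

section Biprod

variable [HasZeroMorphisms C] [HasBinaryBiproducts C] {X₁ Y₁ X₂ Y₂ : C}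
  (f₁ : X₁ ⟶ Y₁) (f₂ : X₂ ⟶ Y₂)

noncomputable def retractArrowBiprodMapLeft : RetractArrow f₁ (biprod.map f₁ f₂) where
  i := Arrow.homMk biprod.inl biprod.inl (by simp)
  r := Arrow.homMk biprod.fst biprod.fst (by simp)
  retract := by ext <;> simp

noncomputable def retractArrowBiprodMapRight : RetractArrow f₂ (biprod.map f₁ f₂) where
  i := Arrow.homMk biprod.inr biprod.inr (by simp)
  r := Arrow.homMk biprod.snd biprod.snd (by simp)
  retract := by ext <;> simp

theorem exists_eq_comp_biprod_map_iff {T : C} (g : T ⟶ Y₁ ⊞ Y₂) :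
    (∃ t, g = t ≫ biprod.map f₁ f₂) ↔
      (∃ t₁, g ≫ biprod.fst = t₁ ≫ f₁) ∧ ∃ t₂, g ≫ biprod.snd = t₂ ≫ f₂ := by
  constructor
  · rintro ⟨t, rfl⟩
    exact ⟨⟨t ≫ biprod.fst, by simp⟩, t ≫ biprod.snd, by simp⟩
  · rintro ⟨⟨t₁, h₁⟩, t₂, h₂⟩
    exact ⟨biprod.lift t₁ t₂, by ext <;> simp [h₁, h₂]⟩

theorem RightDetermined.biprod_map {Cd : C} (h₁ : RightDetermined f₁ Cd)
    (h₂ : RightDetermined f₂ Cd) : RightDetermined (biprod.map f₁ f₂) Cd := by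
  intro T g hg
  have hcomp h := (exists_eq_comp_biprod_map_iff f₁ f₂ (h ≫ g)).1 (hg h)
  rw [exists_eq_comp_biprod_map_iff]
  exact ⟨h₁ _ fun h => by simpa using (hcomp h).1, h₂ _ fun h => by simpa using (hcomp h).2⟩

end Biprod

theorem stmt_0 [Preadditive C] [HasBinaryBiproducts C]
    {X₁ Y₁ X₂ Y₂ : C} (f₁ : X₁ ⟶ Y₁) (f₂ : X₂ ⟶ Y₂) (Cd : C) :
    RightDetermined (biprod.map f₁ f₂) Cd ↔
      (RightDetermined f₁ Cd ∧ RightDetermined f₂ Cd) :=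
  ⟨fun h => ⟨h.of_retractArrow (retractArrowBiprodMapLeft f₁ f₂),
      h.of_retractArrow (retractArrowBiprodMapRight f₁ f₂)⟩,
    fun h => h.1.biprod_map f₁ f₂ h.2⟩
end

section
/- Let C be an additive category with pullbacks of the relevant pairs, f : X → Y and g : Z → Y morphisms, and let f' : E → Z together with g' : E → X form the pullback of f and g. If f is right C-determined for some object C, then f' is right C-determined. -/
open CategoryTheory CategoryTheory.Limits

universe v u u'

variable {C : Type u} [Category.{v} C]

theorem CategoryTheory.IsPullback.exists_eq_comp_snd_iff {P X Y Z : C}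
    {fst : P ⟶ X} {snd : P ⟶ Y} {f : X ⟶ Z} {g : Y ⟶ Z} (hpb : IsPullback fst snd f g) {T : C} (h : T ⟶ Y) :
    (∃ t : T ⟶ P, h = t ≫ snd) ↔ ∃ s : T ⟶ X, h ≫ g = s ≫ f := by
  constructor
  · rintro ⟨t, rfl⟩
    exact ⟨t ≫ fst, by simp [hpb.w]⟩
  · rintro ⟨s, hs⟩
    exact ⟨hpb.lift s h hs.symm, (hpb.lift_snd s h _).symm⟩

theorem stmt_1_general {X Y Z E : C} (f : X ⟶ Y) (g : Z ⟶ Y)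
    (f' : E ⟶ Z) (g' : E ⟶ X) (hpb : IsPullback g' f' f g)
    (Cd : C) (hf : RightDetermined f Cd) :
    RightDetermined f' Cd := by
  intro T h hh
  refine hpb.exists_eq_comp_snd_iff h |>.mpr (hf (h ≫ g) fun u => ?_)
  obtain ⟨s, hs⟩ := hpb.exists_eq_comp_snd_iff (u ≫ h) |>.mp (hh u)
  exact ⟨s, by simpa using hs⟩

theorem stmt_1 [Preadditive C] {X Y Z E : C} (f : X ⟶ Y) (g : Z ⟶ Y)
    (f' : E ⟶ Z) (g' : E ⟶ X) (hpb : IsPullback g' f' f g)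
    (Cd : C) (hf : RightDetermined f Cd) :
    RightDetermined f' Cd :=
  stmt_1_general f g f' g' hpb Cd hf
end

section
/- Let f : X → Y and g : Z → Y be morphisms in an additive category such that End(Z) is a local ring and g almost factors through f. If f' : E → Z is a pullback of f along g, then f' is right almost split. -/
open CategoryTheory CategoryTheory.Limits

universe v u u'

variable {C : Type u} [Category.{v} C]

/-! In a local ring a morphism into `Z` that is not a retraction lies in the radical, so the
almost-factorisation hypothesis lets it factor through `f` after composing with `g`; the pullback
property then lifts it through `f'`. A section of `f'` would make `g` itself factor through `f`. -/

namespace IsLocalRing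

variable {R : Type*} [Ring R] [IsLocalRing R]

theorem eq_zero_or_eq_one_of_isIdempotentElem {e : R} (he : IsIdempotentElem e) :
    e = 0 ∨ e = 1 := by
  rcases isUnit_or_isUnit_of_add_one (add_sub_cancel e 1) with h | h
  · exact .inr ((IsIdempotentElem.iff_eq_one_of_isUnit h).1 he)
  · exact .inl (sub_eq_self.1 ((IsIdempotentElem.iff_eq_one_of_isUnit h).1 he.one_sub))

instance isDedekindFiniteMonoid : IsDedekindFiniteMonoid R where
  mul_eq_one_symm {a b} hab := by
    have he : IsIdempotentElem (b * a) := by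
      rw [IsIdempotentElem, mul_assoc, ← mul_assoc a, hab, one_mul]
    refine (eq_zero_or_eq_one_of_isIdempotentElem he).resolve_left fun h0 =>
      one_ne_zero (α := R) ?_
    calc (1 : R) = a * b * (a * b) := by rw [hab, one_mul]
      _ = a * (b * a) * b := by noncomm_ring
      _ = 0 := by rw [h0, mul_zero, zero_mul]

theorem mem_jacobson_bot_of_not_isUnit {x : R} (hx : ¬IsUnit x) :
    x ∈ Ideal.jacobson (⊥ : Ideal R) := by
  rw [Ideal.mem_jacobson_iff]
  intro y
  have hyx : ¬IsUnit (y * x) := fun h =>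
    hx (IsUnit.of_mul_eq_one_right (h.unit⁻¹ * y) (by rw [mul_assoc]; exact h.unit.inv_mul))
  obtain ⟨z, hz⟩ : IsUnit (y * x + 1) :=
    (isUnit_or_isUnit_of_isUnit_add (a := y * x + 1) (b := -(y * x)) (by simp)).resolve_right
      (by rwa [IsUnit.neg_iff])
  refine ⟨↑z⁻¹, ?_⟩
  rw [Ideal.mem_bot, mul_assoc, sub_eq_zero, ← mul_add_one, ← hz, Units.inv_mul]

end IsLocalRing

theorem radHom_of_not_exists_retraction [Preadditive C] {T Z : C}
    [IsLocalRing (CategoryTheory.End Z)] (h : T ⟶ Z) (hh : ¬∃ s : Z ⟶ T, s ≫ h = 𝟙 Z) :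
    radHom h := by
  intro u
  refine IsLocalRing.mem_jacobson_bot_of_not_isUnit (R := CategoryTheory.End Z) fun hu => hh ?_
  obtain ⟨c, hc⟩ := hu.exists_right_inv
  exact ⟨c ≫ u, by simpa only [End.mul_def, End.one_def, Category.assoc] using hc⟩

theorem stmt_2 [Preadditive C] {X Y Z E : C} (f : X ⟶ Y) (g : Z ⟶ Y)
    (hloc : IsLocalRing (CategoryTheory.End Z)) (haf : AlmostFactorsThrough g f)
    (f' : E ⟶ Z) (g' : E ⟶ X) (hpb : IsPullback g' f' f g) :
    RightAlmostSplit f' := by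
  constructor
  · rintro ⟨s, hs⟩
    exact haf.1 ⟨s ≫ g', by rw [Category.assoc, hpb.w, reassoc_of% hs]⟩
  · intro T h hh
    obtain ⟨s, hs⟩ := haf.2 h (radHom_of_not_exists_retraction h hh)
    exact ⟨hpb.lift s h hs.symm, hpb.lift_snd s h hs.symm⟩
end

section
/- Let C be an exact category, C an object, and α : X → Y a deflation. Then α is right C-determined in C if and only if the image of α in the projectively stable category is right C-determined there. -/
open CategoryTheory CategoryTheory.Limits

universe v u u'

variable {C : Type u} [Category.{v} C]

/-! A projectively trivial morphism into `Y` factors through every deflation onto `Y`, in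
particular through `α`; so factoring through a deflation in the projectively stable category is
the same as factoring through it in `C`, and the two determination conditions coincide. -/

section Exact
variable [Preadditive C] [HasZeroObject C] [HasBinaryBiproducts C] [ExactStruct C]

lemma projTrivial_zero {X Y : C} : ProjTrivial (0 : X ⟶ Y) :=
  fun _ _ _ => ⟨0, zero_comp.symm⟩

lemma stablyFactors_iff_of_isDeflation {T X Y : C} {α : X ⟶ Y} (hα : IsDeflation α)
    (g : T ⟶ Y) : StablyFactors g α ↔ ∃ t : T ⟶ X, g = t ≫ α := by
  constructor
  · rintro ⟨t, htriv⟩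
    obtain ⟨s, hs⟩ := htriv α hα
    exact ⟨s + t, by rw [Preadditive.add_comp, ← hs, sub_add_cancel]⟩
  · rintro ⟨t, rfl⟩
    exact ⟨t, by simpa only [sub_self] using projTrivial_zero⟩

end Exact

theorem stmt_5 [Preadditive C] [HasZeroObject C] [HasBinaryBiproducts C] [ExactStruct C] {X Y : C} (α : X ⟶ Y) (hα : IsDeflation α) (Cd : C) :
    RightDetermined α Cd ↔ RightDeterminedStable α Cd := by
  simp only [RightDetermined, RightDeterminedStable, stablyFactors_iff_of_isDeflation hα]
end

section
/- Let C and C' be objects of an exact category which are isomorphic in the projectively stable category. Then a deflation α : X → Y is right C-determined if and only if it is right C'-determined. -/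
open CategoryTheory CategoryTheory.Limits

universe v u u'

variable {C : Type u} [Category.{v} C]

section Exact
variable [Preadditive C] [HasZeroObject C] [HasBinaryBiproducts C] [ExactStruct C]

theorem ProjTrivial.comp {A B D : C} {p : A ⟶ B} (hp : ProjTrivial p) (k : B ⟶ D) :
    ProjTrivial (p ≫ k) := by
  intro E d hd
  obtain ⟨E', k', d', hpb, hd'⟩ := ExactStruct.pullback_defl d k hd
  obtain ⟨q, hq⟩ := hp d' hd'
  exact ⟨q ≫ k', by rw [Category.assoc, hpb.w, ← Category.assoc, ← hq]⟩

/-- The error term `f ≫ g - 𝟙 Cd` is projectively trivial, hence so is its composite with any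
map to `Y`, which therefore factors through the deflation `α`. -/
theorem RightDetermined.of_stableRetract {X Y Cd Cd' : C} {α : X ⟶ Y} (hα : IsDeflation α)
    (f : Cd ⟶ Cd') (g : Cd' ⟶ Cd) (hfg : ProjTrivial (f ≫ g - 𝟙 Cd))
    (hdet : RightDetermined α Cd) : RightDetermined α Cd' := by
  intro T u hu
  refine hdet u fun k => ?_
  obtain ⟨s, hs⟩ := hu (g ≫ k)
  obtain ⟨t, ht⟩ := hfg.comp (k ≫ u) α hα
  refine ⟨f ≫ s - t, ?_⟩
  calc k ≫ u = f ≫ (g ≫ k) ≫ u - (f ≫ g - 𝟙 Cd) ≫ k ≫ u := by simp [Preadditive.sub_comp]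
    _ = (f ≫ s - t) ≫ α := by rw [hs, ht, Preadditive.sub_comp, Category.assoc]

end Exact

theorem stmt_6 [Preadditive C] [HasZeroObject C] [HasBinaryBiproducts C] [ExactStruct C] {X Y : C} (α : X ⟶ Y) (hα : IsDeflation α)
    (Cd Cd' : C) (hiso : StablyIso Cd Cd') :
    RightDetermined α Cd ↔ RightDetermined α Cd' := by
  obtain ⟨f, g, hfg, hgf⟩ := hiso
  exact ⟨.of_stableRetract hα f g hfg, .of_stableRetract hα g f hgf⟩
end

section
/- Let C be a Hom-finite Krull-Schmidt exact category over a commutative artinian ring k, and let α : X → Y be a deflation whose kernel K lies in C_l. Then α is right τ⁻(K)-determined. -/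
/-!
Pull `α` back along `g : T' ⟶ Y` to a conflation `K' ⟶ B ⟶ T'`. Then `g` factors through `α`
as soon as the comparison map `κ : K' ⟶ K` extends along `K' ⟶ B`. Decompose
`K ≅ I ⊞ ⨁ Ki`: the component into the injective `I` extends automatically. If a component
`K' ⟶ Ki j` did not extend, its pushout would be a non-split inflation out of `Ki j`, hence
would factor through the left almost split `ii j`. The hypothesis on `g` says exactly that
every map `T j ⟶ T'` lifts to `B`, and with it one builds a retraction of `ii j`.
-/


open CategoryTheory CategoryTheory.Limits

universe v u u'

variable {C : Type u} [Category.{v} C]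

section ExtendsAlong

def ExtendsAlong {A B Z : C} (i : A ⟶ B) (f : A ⟶ Z) : Prop :=
  ∃ r : B ⟶ Z, i ≫ r = f

theorem ExtendsAlong.of_comp_iso {A B Z Z' : C} {i : A ⟶ B} {f : A ⟶ Z} (e : Z ≅ Z')
    (h : ExtendsAlong i (f ≫ e.hom)) : ExtendsAlong i f := by
  obtain ⟨r, hr⟩ := h
  exact ⟨r ≫ e.inv, by rw [← Category.assoc, hr, Category.assoc, e.hom_inv_id,
    Category.comp_id]⟩

theorem CategoryTheory.CommSq.extendsAlong_of_retraction {A B Z P : C} {i : A ⟶ B} {f : A ⟶ Z}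
    {g : B ⟶ P} {ι : Z ⟶ P} (sq : CommSq i f g ι) {r : P ⟶ Z} (hr : ι ≫ r = 𝟙 Z) :
    ExtendsAlong i f :=
  ⟨g ≫ r, by rw [← Category.assoc, sq.w, Category.assoc, hr, Category.comp_id]⟩

theorem CategoryTheory.IsPullback.exists_lift_of_factors {P X Y T W : C} {g' : P ⟶ X}
    {β : P ⟶ T} {α : X ⟶ Y} {g : T ⟶ Y} (hpb : IsPullback g' β α g) (h : W ⟶ T)
    (hh : ∃ s : W ⟶ X, h ≫ g = s ≫ α) : ∃ u : W ⟶ P, u ≫ β = h := by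
  obtain ⟨s, hs⟩ := hh
  exact ⟨hpb.lift s h hs.symm, hpb.lift_snd _ _ _⟩

variable [HasZeroMorphisms C]

theorem ExtendsAlong.biprod {A B Z₁ Z₂ : C} [HasBinaryBiproduct Z₁ Z₂] {i : A ⟶ B}
    {f : A ⟶ Z₁ ⊞ Z₂} (h₁ : ExtendsAlong i (f ≫ biprod.fst))
    (h₂ : ExtendsAlong i (f ≫ biprod.snd)) : ExtendsAlong i f := by
  obtain ⟨r₁, hr₁⟩ := h₁
  obtain ⟨r₂, hr₂⟩ := h₂
  exact ⟨biprod.lift r₁ r₂, by ext <;> simp [hr₁, hr₂]⟩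

theorem ExtendsAlong.biproduct {ι : Type*} {A B : C} {Z : ι → C} [HasBiproduct Z]
    {i : A ⟶ B} {f : A ⟶ ⨁ Z} (h : ∀ j, ExtendsAlong i (f ≫ biproduct.π Z j)) :
    ExtendsAlong i f := by
  choose r hr using h
  exact ⟨biproduct.lift r, by ext j; simp [hr]⟩

end ExtendsAlong

section Exact
variable [Preadditive C] [HasZeroObject C] [HasBinaryBiproducts C] [ExactStruct C]

theorem ExactStruct.IsConflation.mono {A B W : C} {i : A ⟶ B} {d : B ⟶ W}
    (h : ExactStruct.IsConflation i d) : Mono i :=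
  ⟨fun a b hab => by
    obtain ⟨_, -, hu⟩ := ExactStruct.isKernel h (a ≫ i)
      (by rw [Category.assoc, ExactStruct.comp_zero h, Limits.comp_zero])
    exact (hu a rfl).trans (hu b hab.symm).symm⟩

theorem ExactStruct.IsConflation.epi {A B W : C} {i : A ⟶ B} {d : B ⟶ W}
    (h : ExactStruct.IsConflation i d) : Epi d :=
  ⟨fun a b hab => by
    obtain ⟨_, -, hu⟩ := ExactStruct.isCokernel h (d ≫ a)
      (by rw [← Category.assoc, ExactStruct.comp_zero h, zero_comp])
    exact (hu a rfl).trans (hu b hab.symm).symm⟩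

theorem InjObj.extendsAlong {A B Z : C} (hZ : InjObj Z) {i : A ⟶ B} (hi : IsInflation i)
    (f : A ⟶ Z) : ExtendsAlong i f := by
  obtain ⟨P, ι, g, hpo, hι⟩ := ExactStruct.pushout_infl i f hi
  obtain ⟨r, hr⟩ := hZ ι hι
  exact hpo.toCommSq.extendsAlong_of_retraction hr

theorem CategoryTheory.IsPushout.exists_cokernel_of_isConflation {A B T Z P W : C} {i : A ⟶ B}
    {β : B ⟶ T} (hc : ExactStruct.IsConflation i β) {f : A ⟶ Z} {g : B ⟶ P} {ι : Z ⟶ P}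
    (hpo : IsPushout i f g ι) {d : P ⟶ W} (hcP : ExactStruct.IsConflation ι d) :
    ∃ δ : P ⟶ T, g ≫ δ = β ∧ ι ≫ δ = 0 ∧
      ∀ {V : C} (v : V ⟶ P), v ≫ δ = 0 → ∃ s : V ⟶ Z, s ≫ ι = v := by
  have hsq : i ≫ β = f ≫ (0 : Z ⟶ T) := by rw [ExactStruct.comp_zero hc, Limits.comp_zero]
  refine ⟨hpo.desc β 0 hsq, hpo.inl_desc _ _ _, hpo.inr_desc _ _ _, fun v hv => ?_⟩
  obtain ⟨w, hw, -⟩ := ExactStruct.isCokernel hc (g ≫ d)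
    (by rw [← Category.assoc, hpo.w, Category.assoc, ExactStruct.comp_zero hcP,
      Limits.comp_zero])
  have hδw : hpo.desc β 0 hsq ≫ w = d := by
    apply hpo.hom_ext
    · rw [← Category.assoc, hpo.inl_desc, hw]
    · rw [← Category.assoc, hpo.inr_desc, zero_comp, ExactStruct.comp_zero hcP]
  obtain ⟨s, hs, -⟩ := ExactStruct.isKernel hcP v
    (by rw [← hδw, ← Category.assoc, hv, zero_comp])
  exact ⟨s, hs⟩

theorem extendsAlong_of_almostSplitConflation {A B T Z E W : C} {i : A ⟶ B} {β : B ⟶ T}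
    (hc : ExactStruct.IsConflation i β) {ii : Z ⟶ E} {dd : E ⟶ W}
    (has : AlmostSplitConflation ii dd)
    (hlift : ∀ h : W ⟶ T, ∃ u : W ⟶ B, u ≫ β = h) (f : A ⟶ Z) : ExtendsAlong i f := by
  by_contra hno
  obtain ⟨P, ι, g, hpo, V, d, hcP⟩ := ExactStruct.pushout_infl i f ⟨T, β, hc⟩
  have hι : ¬ ∃ r : P ⟶ Z, ι ≫ r = 𝟙 Z := fun ⟨_, hr⟩ =>
    hno (hpo.toCommSq.extendsAlong_of_retraction hr)
  obtain ⟨t, ht⟩ := has.2.1.2 ι hι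
  obtain ⟨δ, hgδ, hιδ, hker⟩ := hpo.exists_cokernel_of_isConflation hc hcP
  obtain ⟨h, hh, -⟩ := ExactStruct.isCokernel has.1 (t ≫ δ)
    (by rw [← Category.assoc, ht, hιδ])
  obtain ⟨u, hu⟩ := hlift h
  obtain ⟨s, hs⟩ := hker (t - dd ≫ u ≫ g)
    (by rw [Preadditive.sub_comp, Category.assoc, Category.assoc, hgδ, hu, hh, sub_self])
  have := hcP.mono
  refine has.2.1.1 ⟨s, (cancel_mono ι).1 ?_⟩
  rw [Category.assoc, hs, Preadditive.comp_sub, ht, ← Category.assoc,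
    ExactStruct.comp_zero has.1, zero_comp, sub_zero, Category.id_comp]

theorem exists_factorization_of_extendsAlong {K X Y K' B T : C} {iK : K ⟶ X} {α : X ⟶ Y}
    (hconf : ExactStruct.IsConflation iK α) {i' : K' ⟶ B} {β : B ⟶ T}
    (hc : ExactStruct.IsConflation i' β) {g' : B ⟶ X} {g : T ⟶ Y} (hw : g' ≫ α = β ≫ g)
    {κ : K' ⟶ K} (hκ : κ ≫ iK = i' ≫ g') (hext : ExtendsAlong i' κ) : ∃ t : T ⟶ X, g = t ≫ α := by
  obtain ⟨r, hr⟩ := hext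
  obtain ⟨t, ht, -⟩ := ExactStruct.isCokernel hc (g' - r ≫ iK)
    (by rw [Preadditive.comp_sub, ← Category.assoc, hr, hκ, sub_self])
  have := hc.epi
  refine ⟨t, (cancel_epi β).1 ?_⟩
  rw [← hw, ← Category.assoc, ht, Preadditive.sub_comp, Category.assoc,
    ExactStruct.comp_zero hconf, Limits.comp_zero, sub_zero]

end Exact

section Statement

variable (k : Type u') [CommRing k] [IsArtinianRing k]
variable [Preadditive C] [CategoryTheory.Linear k C] [HasZeroObject C] [HasBinaryBiproducts C] [HasFiniteBiproducts C]
variable [∀ X Y : C, Module.Finite k (X ⟶ Y)] [KrullSchmidtCat C] [ExactStruct C]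

/-- The decomposition `K ≅ I ⊞ ⨁ Ki`, with `I` injective and almost split conflations
`Ki j → E j → T j`, witnesses `K ∈ 𝒞_l`, and then `τ⁻ K = ⨁ T`. -/
theorem stmt_7 {K X Y : C} (iK : K ⟶ X) (α : X ⟶ Y)
    (hconf : ExactStruct.IsConflation iK α)
    (n : ℕ) (I : C) (hI : InjObj I)
    (Ki E T : Fin n → C) (ii : ∀ j, Ki j ⟶ E j) (dd : ∀ j, E j ⟶ T j)
    (hass : ∀ j, AlmostSplitConflation (ii j) (dd j))
    (hdec : Nonempty (K ≅ I ⊞ ⨁ Ki)) :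
    RightDetermined α (⨁ T) := by
  obtain ⟨φ⟩ := hdec
  intro T' g hg
  obtain ⟨B, g', β, hpb, K', i', hc⟩ := ExactStruct.pullback_defl α g ⟨K, iK, hconf⟩
  obtain ⟨κ, hκ, -⟩ := ExactStruct.isKernel hconf (i' ≫ g')
    (by rw [Category.assoc, hpb.w, ← Category.assoc, ExactStruct.comp_zero hc, zero_comp])
  have hlift : ∀ j (h : T j ⟶ T'), ∃ u : T j ⟶ B, u ≫ β = h := fun j h => by
    obtain ⟨s, hs⟩ := hg (biproduct.π T j ≫ h)
    exact hpb.exists_lift_of_factors h ⟨biproduct.ι T j ≫ s, by simp [← hs]⟩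
  refine exists_factorization_of_extendsAlong hconf hc hpb.w hκ
    (.of_comp_iso φ (.biprod ?_ (.biproduct fun j => ?_)))
  · exact hI.extendsAlong ⟨T', β, hc⟩ _
  · exact extendsAlong_of_almostSplitConflation hc (hass j) (hlift j) _

end Statement
end

section
/- Let f : X → Y be a morphism in a Krull-Schmidt additive category that is right C-determined for some object C. If C' is indecomposable and some morphism f' : C' → Y almost factors through f, then C' is a direct summand of C. -/
open CategoryTheory CategoryTheory.Limits

universe v u u'

variable {C : Type u} [Category.{v} C]

/-! Right `Cd`-determinacy applied to `f'`, which does not factor through `f`, yields some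
`h : Cd ⟶ C'` with `h ≫ f'` not factoring through `f`; as `f'` almost factors through `f`, `h`
is not radical. In a Krull–Schmidt category an indecomposable object has a local endomorphism
ring, so some `u ≫ h` with `u : C' ⟶ Cd` is invertible, and then `h` is a split epimorphism. -/

namespace IsLocalRing

variable {R : Type*} [Ring R] [IsLocalRing R]

theorem isUnit_of_mul_eq_one {x y : R} (h : y * x = 1) : IsUnit x := by
  have hxy : IsIdempotentElem (x * y) := by
    rw [IsIdempotentElem, mul_assoc, ← mul_assoc y, h, one_mul]
  rcases eq_zero_or_eq_one_of_isIdempotentElem hxy with h0 | h1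
  · refine absurd ?_ (one_ne_zero (α := R))
    calc (1 : R) = (y * x) * (y * x) := by rw [h, one_mul]
      _ = y * (x * y) * x := by simp only [mul_assoc]
      _ = 0 := by rw [h0, mul_zero, zero_mul]
  · exact isUnit_iff_exists.mpr ⟨y, h1, h⟩

end IsLocalRing

section Preadditive

variable [Preadditive C]

def CategoryTheory.Iso.conjRingEquiv {Z W : C} (e : Z ≅ W) : End Z ≃+* End W :=
  { e.conj with
    map_add' := fun a b => by
      show e.inv ≫ ((a : Z ⟶ Z) + b) ≫ e.hom = e.inv ≫ a ≫ e.hom + e.inv ≫ b ≫ e.hom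
      rw [Preadditive.add_comp, Preadditive.comp_add] }

theorem isLocalRing_end_of_iso {Z W : C} (e : Z ≅ W) [IsLocalRing (End W)] :
    IsLocalRing (End Z) :=
  (e.conjRingEquiv : End Z →+* End W).domain_isLocalRing

theorem isLocalRing_end_of_retract {Z W : C} (hZ : ¬IsZero Z) {s : Z ⟶ W} {r : W ⟶ Z}
    (hsr : s ≫ r = 𝟙 Z) [IsLocalRing (End W)] : IsLocalRing (End Z) := by
  have hidem : IsIdempotentElem (End.of (r ≫ s)) :=
    show (r ≫ s) ≫ r ≫ s = r ≫ s by rw [Category.assoc, reassoc_of% hsr]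
  rcases IsLocalRing.eq_zero_or_eq_one_of_isIdempotentElem hidem with h0 | h1
  · refine absurd ((IsZero.iff_id_eq_zero Z).mpr ?_) hZ
    calc 𝟙 Z = s ≫ (r ≫ s) ≫ r := by simp [hsr]
      _ = 0 := by rw [show r ≫ s = 0 from h0, Limits.zero_comp, Limits.comp_zero]
  · exact isLocalRing_end_of_iso ⟨s, r, hsr, h1⟩

theorem Indec.exists_retract_of_iso_biproduct [HasFiniteBiproducts C] {Z : C} (hZ : Indec Z)
    {n : ℕ} {g : Fin n → C} (e : Z ≅ ⨁ g) :
    ∃ i, (e.hom ≫ biproduct.π g i) ≫ (biproduct.ι g i ≫ e.inv) = 𝟙 Z := by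
  by_contra! hne
  have hzero : ∀ i, (e.hom ≫ biproduct.π g i) ≫ (biproduct.ι g i ≫ e.inv) = 0 := fun i =>
    (hZ.2 _ (by simp)).resolve_right (hne i)
  refine hZ.1 ((IsZero.iff_id_eq_zero Z).mpr ?_)
  calc 𝟙 Z = e.hom ≫ 𝟙 (⨁ g) ≫ e.inv := by simp
    _ = ∑ i, (e.hom ≫ biproduct.π g i) ≫ (biproduct.ι g i ≫ e.inv) := by
      simp only [← biproduct.total, Preadditive.sum_comp, Preadditive.comp_sum, Category.assoc]
    _ = 0 := by simp [hzero]

theorem Indec.isLocalRing_end [HasFiniteBiproducts C] [KrullSchmidtCat C] {Z : C}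
    (hZ : Indec Z) : IsLocalRing (End Z) := by
  obtain ⟨n, g, hloc, ⟨e⟩⟩ := KrullSchmidtCat.decomp Z
  obtain ⟨i, hi⟩ := hZ.exists_retract_of_iso_biproduct e
  have := hloc i
  exact isLocalRing_end_of_retract hZ.1 hi

theorem isSummand_of_not_radHom {T Z : C} [IsLocalRing (End Z)] {h : T ⟶ Z}
    (hh : ¬radHom h) : IsSummand Z T := by
  obtain ⟨u, hu⟩ : ∃ u : Z ⟶ T, IsUnit (End.of (u ≫ h)) := by
    by_contra! hunit
    exact hh fun u => IsLocalRing.mem_jacobson_bot_of_not_isUnit (R := End Z) (hunit u)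
  obtain ⟨v, hv, -⟩ := isUnit_iff_exists.mp hu
  exact ⟨v ≫ u, h, by simpa using hv⟩

end Preadditive

theorem stmt_9 [Preadditive C] [HasFiniteBiproducts C] [KrullSchmidtCat C]
    {X Y : C} (f : X ⟶ Y) (Cd : C) (hdet : RightDetermined f Cd)
    (C' : C) (hind : Indec C') (f' : C' ⟶ Y) (haf : AlmostFactorsThrough f' f) :
    IsSummand C' Cd := by
  obtain ⟨h, hh⟩ : ∃ h : Cd ⟶ C', ¬∃ s : Cd ⟶ X, h ≫ f' = s ≫ f := by
    by_contra! hfac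
    exact haf.1 (hdet f' hfac)
  have := hind.isLocalRing_end
  exact isSummand_of_not_radHom fun hrad => hh (haf.2 h hrad)
end

section
/- Let C be a non-projective indecomposable object of a Hom-finite Krull-Schmidt exact category. Then there exists an almost split conflation ending at C if and only if there exists a deflation α : X → Y and a morphism f : C → Y such that f almost factors through α. -/
open CategoryTheory CategoryTheory.Limits

universe v u u'

variable {C : Type u} [Category.{v} C]

section AuxProof

/-! ### Ring-theoretic auxiliary lemmas -/

lemma aux_idem_eq_zero_or_one {R : Type*} [Ring R] [IsLocalRing R] {e : R} (he : e * e = e) :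
    e = 0 ∨ e = 1 := by
  rcases IsLocalRing.isUnit_or_isUnit_of_add_one (a := e) (b := 1 - e) (by abel) with h | h
  · right
    obtain ⟨u, hu⟩ := h
    have h1 : e * ↑u⁻¹ = 1 := by rw [← hu, Units.mul_inv]
    calc e = e * (e * ↑u⁻¹) := by rw [h1, mul_one]
      _ = (e * e) * ↑u⁻¹ := by rw [mul_assoc]
      _ = 1 := by rw [he, h1]
  · left
    obtain ⟨u, hu⟩ := h
    have hi : (1 - e) * (1 - e) = 1 - e := by
      rw [mul_sub, mul_one, sub_mul, one_mul, he, sub_self, sub_zero]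
    have h1 : (1 - e) * ↑u⁻¹ = 1 := by rw [← hu, Units.mul_inv]
    have h2 : (1 - e : R) = 1 := by
      calc (1 - e : R) = (1 - e) * ((1 - e) * ↑u⁻¹) := by rw [h1, mul_one]
        _ = ((1 - e) * (1 - e)) * ↑u⁻¹ := by rw [mul_assoc]
        _ = 1 := by rw [hi, h1]
    exact sub_eq_self.mp h2

lemma aux_leftinv_isUnit {R : Type*} [Ring R] [IsLocalRing R] {x y : R} (h : y * x = 1) :
    IsUnit x := by
  have he : (x * y) * (x * y) = x * y := by
    rw [mul_assoc, ← mul_assoc y x y, h, one_mul]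
  rcases aux_idem_eq_zero_or_one he with h0 | h1
  · exfalso
    have hx : x = 0 := by
      have hx' : x = (x * y) * x := by rw [mul_assoc, h, mul_one]
      rw [hx', h0, zero_mul]
    rw [hx, mul_zero] at h
    exact zero_ne_one h
  · exact ⟨⟨x, y, h1, h⟩, rfl⟩

lemma aux_nonunit_mem_jacobson {R : Type*} [Ring R] [IsLocalRing R] {x : R} (hx : ¬ IsUnit x) :
    x ∈ Ideal.jacobson (⊥ : Ideal R) := by
  rw [Ideal.jacobson]
  refine Submodule.mem_sInf.2 ?_
  rintro J ⟨-, hJ⟩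
  by_contra hxJ
  have hlt : J < J ⊔ Ideal.span {x} :=
    lt_of_le_of_ne le_sup_left (fun hEq => hxJ (by
      rw [hEq]; exact Submodule.mem_sup_right (Submodule.mem_span_singleton_self x)))
  have htop : J ⊔ Ideal.span {x} = ⊤ := hJ.out.2 _ hlt
  have h1 : (1 : R) ∈ J ⊔ Ideal.span {x} := by rw [htop]; exact Submodule.mem_top
  obtain ⟨m, hm, z, hz, hmz⟩ := Submodule.mem_sup.1 h1
  obtain ⟨a, rfl⟩ := Submodule.mem_span_singleton.1 hz
  rw [smul_eq_mul] at hmz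
  rcases IsLocalRing.isUnit_or_isUnit_of_add_one hmz with hu | hu
  · exact hJ.ne_top (Ideal.eq_top_of_isUnit_mem J hm hu)
  · obtain ⟨u, hu⟩ := hu
    have hli : (↑u⁻¹ * a) * x = 1 := by rw [mul_assoc, ← hu, Units.inv_mul]
    exact hx (aux_leftinv_isUnit hli)

lemma aux_one_not_mem_jacobson {R : Type*} [Ring R] [Nontrivial R] :
    (1 : R) ∉ Ideal.jacobson (⊥ : Ideal R) := by
  intro h1
  obtain ⟨M, hM⟩ := Ideal.exists_maximal R
  rw [Ideal.jacobson] at h1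
  have hmem := Submodule.mem_sInf.1 h1 M ⟨bot_le, hM⟩
  exact hM.ne_top (Ideal.eq_top_of_isUnit_mem M hmem isUnit_one)

/-! ### Endomorphism rings -/

/-- reinterpret an endomorphism as an element of the endomorphism monoid. -/
abbrev toEnd {X : C} (φ : X ⟶ X) : CategoryTheory.End X := φ

lemma aux_end_isUnit {X : C} {φ ψ : X ⟶ X} (h1 : φ ≫ ψ = 𝟙 X) (h2 : ψ ≫ φ = 𝟙 X) :
    IsUnit (toEnd φ) := by
  refine ⟨⟨toEnd φ, toEnd ψ, ?_, ?_⟩, rfl⟩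
  · show ψ ≫ φ = 𝟙 X
    exact h2
  · show φ ≫ ψ = 𝟙 X
    exact h1

lemma aux_end_isUnit_elim {X : C} {φ : X ⟶ X} (h : IsUnit (toEnd φ)) :
    ∃ ψ : X ⟶ X, φ ≫ ψ = 𝟙 X ∧ ψ ≫ φ = 𝟙 X := by
  obtain ⟨u, hu⟩ := h
  have hu' : ((u : CategoryTheory.End X) : X ⟶ X) = φ := hu
  refine ⟨((u⁻¹ : (CategoryTheory.End X)ˣ) : CategoryTheory.End X), ?_, ?_⟩
  · rw [← hu']
    exact u.inv_mul
  · rw [← hu']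
    exact u.mul_inv

section PreaddAux
variable [Preadditive C]

lemma aux_local_transport {X Y : C} (a : X ⟶ Y) (b : Y ⟶ X) (hab : a ≫ b = 𝟙 X)
    (hba : b ≫ a = 𝟙 Y) (h : IsLocalRing (CategoryTheory.End Y)) :
    IsLocalRing (CategoryTheory.End X) := by
  haveI := h
  have hnt : Nontrivial (CategoryTheory.End X) := by
    refine ⟨⟨1, 0, fun h0 => ?_⟩⟩
    have h0' : (𝟙 X : X ⟶ X) = 0 := h0
    have h1 : (𝟙 Y : Y ⟶ Y) = 0 := by
      rw [← hba, ← Category.id_comp a, h0']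
      simp
    exact one_ne_zero (α := CategoryTheory.End Y) h1
  have key : ∀ z : X ⟶ X, IsUnit (toEnd (b ≫ z ≫ a)) → IsUnit (toEnd z) := by
    intro z hz
    obtain ⟨ψ, hψ1, hψ2⟩ := aux_end_isUnit_elim hz
    refine aux_end_isUnit (ψ := a ≫ ψ ≫ b) ?_ ?_
    · calc z ≫ a ≫ ψ ≫ b = (a ≫ b) ≫ z ≫ a ≫ ψ ≫ b := by rw [hab, Category.id_comp]
        _ = a ≫ ((b ≫ z ≫ a) ≫ ψ) ≫ b := by simp only [Category.assoc]
        _ = 𝟙 X := by rw [hψ1, Category.id_comp, hab]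
    · calc (a ≫ ψ ≫ b) ≫ z = (a ≫ ψ ≫ b) ≫ z ≫ (a ≫ b) := by
            rw [hab, Category.comp_id]
        _ = a ≫ (ψ ≫ (b ≫ z ≫ a)) ≫ b := by simp only [Category.assoc]
        _ = 𝟙 X := by rw [hψ2, Category.id_comp, hab]
  refine { toNontrivial := hnt, isUnit_or_isUnit_of_add_one := ?_ }
  intro x y hxy
  have hxy' : (x : X ⟶ X) + y = 𝟙 X := hxy
  have hstep : (b ≫ x ≫ a) + (b ≫ y ≫ a) = b ≫ (x + y) ≫ a := by
    rw [Preadditive.add_comp, Preadditive.comp_add]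
  have haddhom : (b ≫ x ≫ a) + (b ≫ y ≫ a) = 𝟙 Y := by
    rw [hstep, hxy', Category.id_comp, hba]
  have hadd : (toEnd (b ≫ x ≫ a)) + (toEnd (b ≫ y ≫ a)) = 1 := haddhom
  rcases IsLocalRing.isUnit_or_isUnit_of_add_one hadd with h' | h'
  · exact Or.inl (key x h')
  · exact Or.inr (key y h')

lemma aux_indec_local [HasFiniteBiproducts C] [KrullSchmidtCat C] {Z : C} (hZ : Indec Z) :
    IsLocalRing (CategoryTheory.End Z) := by
  obtain ⟨n, f, hloc, ⟨φ⟩⟩ := KrullSchmidtCat.decomp Z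
  have htot : ∑ j : Fin n, (φ.hom ≫ (biproduct.π f j ≫ biproduct.ι f j) ≫ φ.inv) = 𝟙 Z := by
    calc ∑ j : Fin n, (φ.hom ≫ (biproduct.π f j ≫ biproduct.ι f j) ≫ φ.inv)
        = φ.hom ≫ (∑ j : Fin n, biproduct.π f j ≫ biproduct.ι f j) ≫ φ.inv := by
          rw [Preadditive.sum_comp, Preadditive.comp_sum]
      _ = 𝟙 Z := by rw [biproduct.total]; simp
  by_cases hall : ∀ j, (φ.hom ≫ (biproduct.π f j ≫ biproduct.ι f j) ≫ φ.inv) = 0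
  · exfalso
    apply hZ.1
    rw [IsZero.iff_id_eq_zero, ← htot]
    exact Finset.sum_eq_zero (fun j _ => hall j)
  · push_neg at hall
    obtain ⟨j, hj⟩ := hall
    have hidem : (φ.hom ≫ (biproduct.π f j ≫ biproduct.ι f j) ≫ φ.inv) ≫
        (φ.hom ≫ (biproduct.π f j ≫ biproduct.ι f j) ≫ φ.inv) =
        (φ.hom ≫ (biproduct.π f j ≫ biproduct.ι f j) ≫ φ.inv) := by
      simp
    have hone := (hZ.2 _ hidem).resolve_left hj
    refine aux_local_transport (φ.hom ≫ biproduct.π f j) (biproduct.ι f j ≫ φ.inv) ?_ ?_ (hloc j)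
    · simpa using hone
    · simp

lemma aux_not_splitEpi_of_radHom {T Z : C} (hnz : ¬ IsZero Z) {h : T ⟶ Z} (hr : radHom h) :
    ¬ ∃ s : Z ⟶ T, s ≫ h = 𝟙 Z := by
  rintro ⟨s, hs⟩
  haveI : Nontrivial (CategoryTheory.End Z) := by
    refine ⟨⟨1, 0, fun h0 => hnz ?_⟩⟩
    rw [IsZero.iff_id_eq_zero]
    exact h0
  have hmem := hr s
  rw [hs] at hmem
  exact aux_one_not_mem_jacobson (R := CategoryTheory.End Z) hmem

lemma aux_radHom_of_not_splitEpi {T Z : C} (hloc : IsLocalRing (CategoryTheory.End Z))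
    {h : T ⟶ Z} (hns : ¬ ∃ s : Z ⟶ T, s ≫ h = 𝟙 Z) : radHom h := by
  intro u
  haveI := hloc
  refine aux_nonunit_mem_jacobson (R := CategoryTheory.End Z) ?_
  intro hu
  obtain ⟨ψ, hψ1, hψ2⟩ := aux_end_isUnit_elim (φ := u ≫ h) hu
  exact hns ⟨ψ ≫ u, by rw [Category.assoc]; exact hψ2⟩

end PreaddAux

/-! ### Conflation basics -/

section ExactAux
variable [Preadditive C] [HasZeroObject C] [HasBinaryBiproducts C] [ExactStruct C]

lemma conf_epi {X E Y : C} {i : X ⟶ E} {d : E ⟶ Y} (hc : ExactStruct.IsConflation i d)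
    {T : C} {a b : Y ⟶ T} (hab : d ≫ a = d ≫ b) : a = b := by
  have h0 : i ≫ (d ≫ a) = 0 := by
    rw [← Category.assoc, ExactStruct.comp_zero hc, zero_comp]
  obtain ⟨t, ht, huniq⟩ := ExactStruct.isCokernel hc (d ≫ a) h0
  exact (huniq a rfl).trans (huniq b hab.symm).symm

lemma conf_mono {X E Y : C} {i : X ⟶ E} {d : E ⟶ Y} (hc : ExactStruct.IsConflation i d)
    {T : C} {a b : T ⟶ X} (hab : a ≫ i = b ≫ i) : a = b := by
  have h0 : (a ≫ i) ≫ d = 0 := by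
    rw [Category.assoc, ExactStruct.comp_zero hc, comp_zero]
  obtain ⟨t, ht, huniq⟩ := ExactStruct.isKernel hc (a ≫ i) h0
  exact (huniq a rfl).trans (huniq b hab.symm).symm

lemma conf_splitEpi_of_splitMono {X E Y : C} {i : X ⟶ E} {d : E ⟶ Y}
    (hc : ExactStruct.IsConflation i d) (h : ∃ r : E ⟶ X, i ≫ r = 𝟙 X) :
    ∃ s : Y ⟶ E, s ≫ d = 𝟙 Y := by
  obtain ⟨r, hr⟩ := h
  have h0 : i ≫ (𝟙 E - r ≫ i) = 0 := by
    rw [Preadditive.comp_sub, Category.comp_id, ← Category.assoc, hr, Category.id_comp, sub_self]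
  obtain ⟨t, ht, -⟩ := ExactStruct.isCokernel hc _ h0
  refine ⟨t, conf_epi hc ?_⟩
  rw [← Category.assoc, ht, Preadditive.sub_comp, Category.id_comp, Category.assoc,
    ExactStruct.comp_zero hc, comp_zero, sub_zero, Category.comp_id]

lemma conf_splitMono_of_splitEpi {X E Y : C} {i : X ⟶ E} {d : E ⟶ Y}
    (hc : ExactStruct.IsConflation i d) (h : ∃ s : Y ⟶ E, s ≫ d = 𝟙 Y) :
    ∃ r : E ⟶ X, i ≫ r = 𝟙 X := by
  obtain ⟨s, hs⟩ := h
  have h0 : (𝟙 E - d ≫ s) ≫ d = 0 := by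
    rw [Preadditive.sub_comp, Category.id_comp, Category.assoc, hs, Category.comp_id, sub_self]
  obtain ⟨r, hrr, -⟩ := ExactStruct.isKernel hc _ h0
  refine ⟨r, conf_mono hc ?_⟩
  rw [Category.assoc, hrr, Preadditive.comp_sub, Category.comp_id, ← Category.assoc,
    ExactStruct.comp_zero hc, zero_comp, sub_zero, Category.id_comp]

/-! ### Key lemma: a non-split RAS conflation with local endomorphism ring of the kernel
is almost split -/

lemma aux_leftAS {K E Y : C} {i : K ⟶ E} {d : E ⟶ Y}
    (hc : ExactStruct.IsConflation i d) (hras : RightAlmostSplit d)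
    (hloc : IsLocalRing (CategoryTheory.End K)) : LeftAlmostSplit i := by
  constructor
  · intro hsm
    exact hras.1 (conf_splitEpi_of_splitMono hc hsm)
  · intro T g hg
    obtain ⟨P, i', g', hpo, W, d'', hc''⟩ := ExactStruct.pushout_infl i g ⟨Y, d, hc⟩
    have hw0 : i ≫ d = g ≫ (0 : T ⟶ Y) := by rw [ExactStruct.comp_zero hc, comp_zero]
    set c : P ⟶ Y := hpo.desc d 0 hw0 with hcdef
    have hg'c : g' ≫ c = d := hpo.inl_desc d 0 hw0
    have hi'c : i' ≫ c = 0 := hpo.inr_desc d 0 hw0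
    have hi'sm : ∃ r : P ⟶ T, i' ≫ r = 𝟙 T := by
      have hcse : ∃ s : Y ⟶ P, s ≫ c = 𝟙 Y := by
        by_contra hns
        obtain ⟨t0, ht0⟩ := hras.2 c hns
        have hu0 : (i' ≫ t0) ≫ d = 0 := by rw [Category.assoc, ht0, hi'c]
        obtain ⟨u, hu, -⟩ := ExactStruct.isKernel hc _ hu0
        by_cases hk : IsUnit (toEnd (g ≫ u))
        · obtain ⟨ψ, hψ1, hψ2⟩ := aux_end_isUnit_elim hk
          exact hg ⟨u ≫ ψ, by rw [← Category.assoc]; exact hψ1⟩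
        · haveI := hloc
          have hid : toEnd (g ≫ u) + toEnd (𝟙 K - g ≫ u) = 1 := by
            show (g ≫ u) + (𝟙 K - g ≫ u) = 𝟙 K
            abel
          have hunit : IsUnit (toEnd (𝟙 K - g ≫ u)) :=
            (IsLocalRing.isUnit_or_isUnit_of_add_one hid).resolve_left hk
          obtain ⟨ψ, hψ1, hψ2⟩ := aux_end_isUnit_elim hunit
          have hrho0 : (𝟙 E - g' ≫ t0) ≫ d = 0 := by
            rw [Preadditive.sub_comp, Category.id_comp, Category.assoc, ht0, hg'c, sub_self]
          obtain ⟨rho, hrho, -⟩ := ExactStruct.isKernel hc _ hrho0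
          have hcross : i ≫ (g' ≫ t0) = (g ≫ u) ≫ i := by
            rw [← Category.assoc, hpo.w, Category.assoc, ← hu, ← Category.assoc]
          have hirho : i ≫ rho = 𝟙 K - g ≫ u := by
            apply conf_mono hc
            rw [Category.assoc, hrho, Preadditive.comp_sub, Category.comp_id, hcross,
              Preadditive.sub_comp, Category.id_comp]
          have hsm : i ≫ (rho ≫ ψ) = 𝟙 K := by
            rw [← Category.assoc, hirho]; exact hψ1
          exact hras.1 (conf_splitEpi_of_splitMono hc ⟨rho ≫ ψ, hsm⟩)
      -- from c split epi to i' split mono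
      obtain ⟨s, hs⟩ := hcse
      obtain ⟨w0, hw0', -⟩ := ExactStruct.isCokernel hc'' c hi'c
      have hv0 : i ≫ (g' ≫ d'') = 0 := by
        rw [← Category.assoc, hpo.w, Category.assoc, ExactStruct.comp_zero hc'', comp_zero]
      obtain ⟨v, hv, -⟩ := ExactStruct.isCokernel hc _ hv0
      have hvw : v ≫ w0 = 𝟙 Y := conf_epi hc (by
        rw [← Category.assoc, hv, Category.assoc, hw0', hg'c, Category.comp_id])
      have hcv : c ≫ v = d'' := hpo.hom_ext
        (by rw [← Category.assoc, hg'c, hv])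
        (by rw [← Category.assoc, hi'c, zero_comp, ExactStruct.comp_zero hc''])
      have hwv : w0 ≫ v = 𝟙 W := conf_epi hc'' (by
        rw [← Category.assoc, hw0', hcv, Category.comp_id])
      have h1 : s ≫ d'' ≫ w0 = 𝟙 Y := by rw [hw0']; exact hs
      have hsigma : (w0 ≫ s) ≫ d'' = 𝟙 W := by
        calc (w0 ≫ s) ≫ d'' = w0 ≫ s ≫ d'' := by rw [Category.assoc]
          _ = w0 ≫ s ≫ d'' ≫ (w0 ≫ v) := by rw [hwv, Category.comp_id]
          _ = w0 ≫ (s ≫ d'' ≫ w0) ≫ v := by simp only [Category.assoc]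
          _ = w0 ≫ v := by rw [h1, Category.id_comp]
          _ = 𝟙 W := hwv
      exact conf_splitMono_of_splitEpi hc'' ⟨w0 ≫ s, hsigma⟩
    obtain ⟨r, hr⟩ := hi'sm
    exact ⟨g' ≫ r, by rw [← Category.assoc, hpo.w, Category.assoc, hr, Category.comp_id]⟩

/-! ### Reduction: pushing out along a projection of the kernel -/

lemma aux_reduce {K E Y M : C} {i : K ⟶ E} {d : E ⟶ Y}
    (hc : ExactStruct.IsConflation i d) (hras : RightAlmostSplit d)
    (p : K ⟶ M) (hnf : ¬ ∃ r : E ⟶ M, i ≫ r = p) :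
    ∃ (K' E' : C) (i' : K' ⟶ E') (d' : E' ⟶ Y), ExactStruct.IsConflation i' d' ∧
      RightAlmostSplit d' ∧ ∃ (u : K' ⟶ M) (u' : M ⟶ K'), u ≫ u' = 𝟙 K' ∧ u' ≫ u = 𝟙 M := by
  obtain ⟨P, iM, g', hpo, W, d'', hc''⟩ := ExactStruct.pushout_infl i p ⟨Y, d, hc⟩
  have hw0 : i ≫ d = p ≫ (0 : M ⟶ Y) := by rw [ExactStruct.comp_zero hc, comp_zero]
  set c : P ⟶ Y := hpo.desc d 0 hw0 with hcdef
  have hg'c : g' ≫ c = d := hpo.inl_desc d 0 hw0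
  have hiMc : iM ≫ c = 0 := hpo.inr_desc d 0 hw0
  obtain ⟨w0, hw0', -⟩ := ExactStruct.isCokernel hc'' c hiMc
  have hv0 : i ≫ (g' ≫ d'') = 0 := by
    rw [← Category.assoc, hpo.w, Category.assoc, ExactStruct.comp_zero hc'', comp_zero]
  obtain ⟨v, hv, -⟩ := ExactStruct.isCokernel hc _ hv0
  have hvw : v ≫ w0 = 𝟙 Y := conf_epi hc (by
    rw [← Category.assoc, hv, Category.assoc, hw0', hg'c, Category.comp_id])
  have hcv : c ≫ v = d'' := hpo.hom_ext
    (by rw [← Category.assoc, hg'c, hv])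
    (by rw [← Category.assoc, hiMc, zero_comp, ExactStruct.comp_zero hc''])
  have hwv : w0 ≫ v = 𝟙 W := conf_epi hc'' (by
    rw [← Category.assoc, hw0', hcv, Category.comp_id])
  obtain ⟨Q, aQ, dQ, hpb, KQ, iQ, hcQ⟩ := ExactStruct.pullback_defl d'' v ⟨M, iM, hc''⟩
  have hsq : aQ ≫ d'' = dQ ≫ v := hpb.w
  have hdQ : dQ = aQ ≫ c := by
    have hstep : aQ ≫ d'' ≫ w0 = dQ ≫ v ≫ w0 := by
      rw [← Category.assoc, hsq, Category.assoc]
    rw [hw0', hvw, Category.comp_id] at hstep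
    exact hstep.symm
  have hcveq : 𝟙 P ≫ d'' = c ≫ v := by rw [Category.id_comp, hcv]
  set l : P ⟶ Q := hpb.lift (𝟙 P) c hcveq with hldef
  have hla : l ≫ aQ = 𝟙 P := hpb.lift_fst _ _ _
  have hldQ : l ≫ dQ = c := hpb.lift_snd _ _ _
  have hal : aQ ≫ l = 𝟙 Q := by
    apply hpb.hom_ext
    · rw [Category.assoc, hla, Category.comp_id, Category.id_comp]
    · rw [Category.assoc, hldQ, hdQ, Category.id_comp]
  have hrasQ : RightAlmostSplit dQ := by
    constructor
    · rintro ⟨s, hs⟩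
      have hsigma : ((w0 ≫ s) ≫ aQ) ≫ d'' = 𝟙 W := by
        calc ((w0 ≫ s) ≫ aQ) ≫ d'' = w0 ≫ s ≫ (aQ ≫ d'') := by simp only [Category.assoc]
          _ = w0 ≫ (s ≫ dQ) ≫ v := by rw [hsq]; simp only [Category.assoc]
          _ = 𝟙 W := by rw [hs, Category.id_comp, hwv]
      obtain ⟨r, hr⟩ := conf_splitMono_of_splitEpi hc'' ⟨(w0 ≫ s) ≫ aQ, hsigma⟩
      exact hnf ⟨g' ≫ r, by rw [← Category.assoc, hpo.w, Category.assoc, hr, Category.comp_id]⟩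
    · intro T g hgns
      obtain ⟨t, ht⟩ := hras.2 g hgns
      refine ⟨t ≫ g' ≫ l, ?_⟩
      simp only [Category.assoc]
      rw [hldQ, hg'c, ht]
  have hiQ0 : (iQ ≫ aQ) ≫ d'' = 0 := by
    rw [Category.assoc, hsq, ← Category.assoc, ExactStruct.comp_zero hcQ, zero_comp]
  obtain ⟨mu, hmu, -⟩ := ExactStruct.isKernel hc'' (iQ ≫ aQ) hiQ0
  have hiM0 : (iM ≫ l) ≫ dQ = 0 := by rw [Category.assoc, hldQ, hiMc]
  obtain ⟨nu, hnu, -⟩ := ExactStruct.isKernel hcQ (iM ≫ l) hiM0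
  have hmunu : mu ≫ nu = 𝟙 KQ := conf_mono hcQ (by
    rw [Category.assoc, hnu, ← Category.assoc, hmu, Category.assoc, hal, Category.comp_id,
      Category.id_comp])
  have hnumu : nu ≫ mu = 𝟙 M := conf_mono hc'' (by
    rw [Category.assoc, hmu, ← Category.assoc, hnu, Category.assoc, hla, Category.comp_id,
      Category.id_comp])
  exact ⟨KQ, Q, iQ, dQ, hcQ, hrasQ, mu, nu, hmunu, hnumu⟩

/-! ### Master induction -/

lemma aux_master [HasFiniteBiproducts C] {Y : C} :
    ∀ (n : ℕ) (f : Fin n → C), (∀ j, IsLocalRing (CategoryTheory.End (f j))) →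
    ∀ (K E : C) (i : K ⟶ E) (d : E ⟶ Y), ExactStruct.IsConflation i d →
    RightAlmostSplit d → (K ≅ ⨁ f) →
    ∃ (K' E' : C) (i' : K' ⟶ E') (d' : E' ⟶ Y), AlmostSplitConflation i' d' := by
  intro n
  induction n with
  | zero =>
    intro f hloc K E i d hc hras φ
    exfalso
    have hzero : (𝟙 (⨁ f) : ⨁ f ⟶ ⨁ f) = 0 := by
      apply biproduct.hom_ext
      intro j
      exact j.elim0
    have hi0 : i = 0 := by
      calc i = (φ.hom ≫ 𝟙 (⨁ f) ≫ φ.inv) ≫ i := by simp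
        _ = 0 := by rw [hzero]; simp
    have h1 : i ≫ 𝟙 E = 0 := by rw [hi0, zero_comp]
    obtain ⟨t, ht, -⟩ := ExactStruct.isCokernel hc (𝟙 E) h1
    apply hras.1
    refine ⟨t, conf_epi hc ?_⟩
    rw [← Category.assoc, ht, Category.id_comp, Category.comp_id]
  | succ m ih =>
    intro f hloc K E i d hc hras φ
    set g : Fin m → C := fun j => f j.succ with hgdef
    set pA : K ⟶ f 0 := φ.hom ≫ biproduct.π f 0 with hpA
    set jA : f 0 ⟶ K := biproduct.ι f 0 ≫ φ.inv with hjA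
    set pB : K ⟶ ⨁ g := φ.hom ≫ biproduct.lift (fun j : Fin m => biproduct.π f j.succ) with hpB
    set jB : (⨁ g) ⟶ K :=
      biproduct.desc (fun j : Fin m => biproduct.ι f j.succ) ≫ φ.inv with hjB
    have htot : pA ≫ jA + pB ≫ jB = 𝟙 K := by
      have hsum : (biproduct.π f 0 ≫ biproduct.ι f 0) +
          (biproduct.lift (fun j : Fin m => biproduct.π f j.succ) ≫
            biproduct.desc (fun j : Fin m => biproduct.ι f j.succ)) = 𝟙 (⨁ f) := by
        rw [biproduct.lift_desc, ← biproduct.total (f := f), Fin.sum_univ_succ]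
      calc pA ≫ jA + pB ≫ jB
          = φ.hom ≫ ((biproduct.π f 0 ≫ biproduct.ι f 0) +
              (biproduct.lift (fun j : Fin m => biproduct.π f j.succ) ≫
                biproduct.desc (fun j : Fin m => biproduct.ι f j.succ))) ≫ φ.inv := by
            rw [Preadditive.add_comp, Preadditive.comp_add]
            simp only [hpA, hjA, hpB, hjB, Category.assoc]
            rfl
        _ = 𝟙 K := by rw [hsum]; simp
    by_cases hA : ∃ r : E ⟶ f 0, i ≫ r = pA
    · by_cases hB : ∃ r : E ⟶ ⨁ g, i ≫ r = pB
      · exfalso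
        obtain ⟨rA, hrA⟩ := hA
        obtain ⟨rB, hrB⟩ := hB
        have hsm : i ≫ (rA ≫ jA + rB ≫ jB) = 𝟙 K := by
          rw [Preadditive.comp_add]
          rw [show i ≫ rA ≫ jA = pA ≫ jA from by rw [← Category.assoc, hrA]]
          rw [show i ≫ rB ≫ jB = pB ≫ jB from by rw [← Category.assoc, hrB]]
          exact htot
        exact hras.1 (conf_splitEpi_of_splitMono hc ⟨_, hsm⟩)
      · obtain ⟨K', E', i', d', hc', hras', u, u', huu', hu'u⟩ := aux_reduce hc hras pB hB
        exact ih g (fun j => hloc j.succ) K' E' i' d' hc' hras' ⟨u, u', huu', hu'u⟩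
    · obtain ⟨K', E', i', d', hc', hras', u, u', huu', hu'u⟩ := aux_reduce hc hras pA hA
      have hloc' : IsLocalRing (CategoryTheory.End K') :=
        aux_local_transport u u' huu' hu'u (hloc 0)
      exact ⟨K', E', i', d', hc', aux_leftAS hc' hras' hloc', hras'⟩

end ExactAux
end AuxProof

section Statement

variable (k : Type u') [CommRing k] [IsArtinianRing k]
variable [Preadditive C] [CategoryTheory.Linear k C] [HasZeroObject C] [HasBinaryBiproducts C] [HasFiniteBiproducts C]
variable [∀ X Y : C, Module.Finite k (X ⟶ Y)] [KrullSchmidtCat C] [ExactStruct C]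

theorem stmt_16 (Cd : C) (hind : Indec Cd) (hnp : ¬ ProjObj Cd) :
    (∃ (K E : C) (i : K ⟶ E) (d : E ⟶ Cd), AlmostSplitConflation i d) ↔
    (∃ (X Y : C) (α : X ⟶ Y) (f : Cd ⟶ Y), IsDeflation α ∧ AlmostFactorsThrough f α) := by
  constructor
  · rintro ⟨K, E, i, d, hconf, hlas, hras⟩
    refine ⟨E, Cd, d, 𝟙 Cd, ⟨K, i, hconf⟩, ?_, ?_⟩
    · rintro ⟨s, hs⟩
      exact hras.1 ⟨s, hs.symm⟩
    · intro T h hrad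
      have hns := aux_not_splitEpi_of_radHom hind.1 hrad
      obtain ⟨t, ht⟩ := hras.2 h hns
      exact ⟨t, by rw [Category.comp_id]; exact ht.symm⟩
  · rintro ⟨X, Y, α, f, hdefl, hnf, hrad⟩
    have hloc := aux_indec_local (C := C) hind
    obtain ⟨E, g', d', hpb, K, i, hconf⟩ := ExactStruct.pullback_defl α f hdefl
    have hras : RightAlmostSplit d' := by
      constructor
      · rintro ⟨s, hs⟩
        apply hnf
        refine ⟨s ≫ g', ?_⟩
        have hw := hpb.w
        calc f = 𝟙 Cd ≫ f := (Category.id_comp f).symm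
          _ = (s ≫ d') ≫ f := by rw [hs]
          _ = s ≫ g' ≫ α := by rw [Category.assoc, ← hw]
          _ = (s ≫ g') ≫ α := by rw [Category.assoc]
      · intro T g hg
        obtain ⟨s, hs⟩ := hrad g (aux_radHom_of_not_splitEpi hloc hg)
        exact ⟨hpb.lift s g hs.symm, hpb.lift_snd _ _ _⟩
    obtain ⟨n, fK, hlocK, ⟨ψ⟩⟩ := KrullSchmidtCat.decomp K
    exact aux_master n fK hlocK K E i d' hconf hras ψ

end Statement
end

section
/- Every morphism f : X → Y in a Hom-finite Krull-Schmidt additive category over a commutative artinian ring has a right minimal version: there exists a right minimal morphism f' : X' → Y such that f and f' factor through each other. -/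
open CategoryTheory CategoryTheory.Limits

universe v u u'

variable {C : Type u} [Category.{v} C]

/-!
If `f : ⨁ Z ⟶ Y` with all `End (Z i)` local is not right minimal, pick `g` with `g ≫ f = f`
and `g` not invertible. Then `𝟙 - g` is not in the radical of the category, so one of its
matrix entries `Z i ⟶ Z j` is an isomorphism; this splits off a copy of `Z j` inside the kernel
of `f`, and deleting that summand gives a right equivalent morphism with fewer summands.
-/

namespace RightEquiv

variable {X X' X'' Y : C}

lemma refl (f : X ⟶ Y) : RightEquiv f f :=
  ⟨⟨𝟙 _, (Category.id_comp f).symm⟩, ⟨𝟙 _, (Category.id_comp f).symm⟩⟩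

lemma trans {f : X ⟶ Y} {f' : X' ⟶ Y} {f'' : X'' ⟶ Y}
    (h : RightEquiv f f') (h' : RightEquiv f' f'') : RightEquiv f f'' := by
  obtain ⟨⟨u, hu⟩, ⟨v, hv⟩⟩ := h
  obtain ⟨⟨u', hu'⟩, ⟨v', hv'⟩⟩ := h'
  exact ⟨⟨u ≫ u', by rw [hu, hu', Category.assoc]⟩, ⟨v' ≫ v, by rw [hv', hv, Category.assoc]⟩⟩

lemma inv_comp (α : X ≅ X') (f : X ⟶ Y) : RightEquiv f (α.inv ≫ f) :=
  ⟨⟨α.hom, (α.hom_inv_id_assoc f).symm⟩, ⟨α.inv, rfl⟩⟩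

end RightEquiv

section Radical

variable [Preadditive C]

/-- The radical of the category, described by quasi-regularity: equivalent to `radHom`, without
going through the Jacobson radical of the noncommutative ring `End A`. -/
def InRadical {A B : C} (u : A ⟶ B) : Prop :=
  ∀ v : B ⟶ A, IsIso (𝟙 A - u ≫ v)

/-- Jacobson's lemma; the inverse is `𝟙 B + y ≫ (𝟙 A - x ≫ y)⁻¹ ≫ x`. -/
lemma isIso_id_sub_comp_swap {A B : C} (x : A ⟶ B) (y : B ⟶ A) [IsIso (𝟙 A - x ≫ y)] :
    IsIso (𝟙 B - y ≫ x) := by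
  set i := inv (𝟙 A - x ≫ y)
  have hi : x ≫ y ≫ i = i - 𝟙 A := by
    have := IsIso.hom_inv_id (𝟙 A - x ≫ y)
    rw [Preadditive.sub_comp, Category.id_comp, Category.assoc] at this
    linear_combination (norm := abel) -this
  have hi' : i ≫ x ≫ y = i - 𝟙 A := by
    have := IsIso.inv_hom_id (𝟙 A - x ≫ y)
    rw [Preadditive.comp_sub, Category.comp_id] at this
    linear_combination (norm := abel) -this
  refine ⟨⟨𝟙 B + y ≫ i ≫ x, ?_, ?_⟩⟩
  · simp only [Preadditive.sub_comp, Preadditive.comp_add, Category.id_comp, Category.comp_id,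
      Category.assoc, reassoc_of% hi, Preadditive.comp_sub]
    abel
  · simp only [Preadditive.sub_comp, Preadditive.comp_sub, Preadditive.add_comp,
      Category.id_comp, Category.comp_id, Category.assoc, reassoc_of% hi']
    abel

namespace InRadical

variable {A A' B B' : C} {u u₁ u₂ : A ⟶ B}

lemma comp_right (hu : InRadical u) (w : B ⟶ B') : InRadical (u ≫ w) := fun v => by
  simpa using hu (w ≫ v)

lemma comp_left (hu : InRadical u) (w : A' ⟶ A) : InRadical (w ≫ u) := fun v => by
  have : IsIso (𝟙 A - (u ≫ v) ≫ w) := by simpa using hu (v ≫ w)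
  simpa using isIso_id_sub_comp_swap (u ≫ v) w

lemma zero : InRadical (0 : A ⟶ B) := fun v => by
  simpa using (inferInstance : IsIso (𝟙 A))

lemma add (h₁ : InRadical u₁) (h₂ : InRadical u₂) : InRadical (u₁ + u₂) := fun v => by
  have := h₁ v
  have := (h₂.comp_left (inv (𝟙 A - u₁ ≫ v))) v
  have factor : (𝟙 A - u₁ ≫ v) ≫ (𝟙 A - (inv (𝟙 A - u₁ ≫ v) ≫ u₂) ≫ v) =
      𝟙 A - (u₁ + u₂) ≫ v := by
    simp only [Preadditive.comp_sub, Preadditive.add_comp, Category.comp_id,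
      IsIso.hom_inv_id_assoc, Category.assoc]
    abel
  rw [← factor]
  infer_instance

lemma sum {ι : Type*} (s : Finset ι) {u : ι → (A ⟶ B)} (h : ∀ i ∈ s, InRadical (u i)) :
    InRadical (∑ i ∈ s, u i) :=
  Finset.sum_induction u InRadical (fun _ _ => add) zero h

end InRadical

/-- The idempotent `v ≫ (u ≫ v)⁻¹ ≫ u` of the local ring `End B` is `0` or `1`, which rules out
`u ≫ v` being a unit of the local ring `End A`. -/
lemma inRadical_of_not_isIso {A B : C} [IsLocalRing (End A)] [IsLocalRing (End B)]
    {u : A ⟶ B} (hu : ¬ IsIso u) : InRadical u := by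
  intro v
  have huv : ¬ IsIso (u ≫ v) := by
    intro _
    set e : End B := v ≫ inv (u ≫ v) ≫ u with he
    have hidem : IsIdempotentElem e := by
      simp only [IsIdempotentElem, he, End.mul_def, Category.assoc]
      rw [← Category.assoc u v, IsIso.hom_inv_id_assoc]
    rcases IsLocalRing.isUnit_or_isUnit_of_add_one (add_sub_cancel e 1) with h | h
    · have he1 : v ≫ inv (u ≫ v) ≫ u = 𝟙 B := (IsIdempotentElem.iff_eq_one_of_isUnit h).mp hidem
      exact hu ⟨⟨v ≫ inv (u ≫ v), by rw [← Category.assoc, IsIso.hom_inv_id],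
        by rw [Category.assoc, he1]⟩⟩
    · have he0 : e = 0 :=
        sub_eq_self.mp ((IsIdempotentElem.iff_eq_one_of_isUnit h).mp hidem.one_sub)
      have hsplit : u ≫ v ≫ inv (u ≫ v) = 𝟙 A := by rw [← Category.assoc, IsIso.hom_inv_id]
      have : 𝟙 A = 0 :=
        calc 𝟙 A = u ≫ (v ≫ inv (u ≫ v) ≫ u) ≫ v ≫ inv (u ≫ v) := by
              simp only [Category.assoc, reassoc_of% hsplit, hsplit]
          _ = 0 := by rw [show v ≫ inv (u ≫ v) ≫ u = 0 from he0, zero_comp, comp_zero]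
      exact one_ne_zero (α := End A) this
  set a : End A := u ≫ v
  have := (IsLocalRing.isUnit_or_isUnit_of_add_one (add_sub_cancel a 1)).resolve_left
    (by rwa [isUnit_iff_isIso])
  exact (isUnit_iff_isIso _).mp this

lemma inRadical_of_forall_components {ι : Type} [Fintype ι] (Z : ι → C) [HasBiproduct Z]
    {b : ⨁ Z ⟶ ⨁ Z} (h : ∀ i j, InRadical (biproduct.ι Z i ≫ b ≫ biproduct.π Z j)) :
    InRadical b := by
  have hb : b = ∑ i, ∑ j, biproduct.π Z i ≫ (biproduct.ι Z i ≫ b ≫ biproduct.π Z j) ≫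
      biproduct.ι Z j :=
    calc b = (∑ i, biproduct.π Z i ≫ biproduct.ι Z i) ≫ b ≫
          ∑ j, biproduct.π Z j ≫ biproduct.ι Z j := by
          simp only [biproduct.total, Category.id_comp, Category.comp_id]
      _ = _ := by
        simp only [Preadditive.sum_comp, Preadditive.comp_sum, Category.assoc]
        exact Finset.sum_comm
  rw [hb]
  exact InRadical.sum _ fun i _ => InRadical.sum _ fun j _ => ((h i j).comp_right _).comp_left _

end Radical

section KrullSchmidt

variable [Preadditive C] [HasFiniteBiproducts C]

lemma exists_section_π_comp_eq_zero_of_not_rightMinimal {ι : Type} [Fintype ι] (Z : ι → C)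
    [∀ i, IsLocalRing (End (Z i))] {Y : C} {f : ⨁ Z ⟶ Y} (hf : ¬ RightMinimal f) :
    ∃ (j : ι) (s : Z j ⟶ ⨁ Z), s ≫ biproduct.π Z j = 𝟙 _ ∧ s ≫ f = 0 := by
  obtain ⟨g, hgf, hg⟩ : ∃ g, g ≫ f = f ∧ ¬ IsIso g := by
    simpa [RightMinimal] using hf
  have hbf : (𝟙 _ - g) ≫ f = 0 := by simp [hgf]
  obtain ⟨i, j, hij⟩ : ∃ i j, IsIso (biproduct.ι Z i ≫ (𝟙 _ - g) ≫ biproduct.π Z j) := by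
    by_contra! hnone
    have := inRadical_of_forall_components Z (fun i j => inRadical_of_not_isIso (hnone i j)) (𝟙 _)
    exact hg (by simpa using this)
  refine ⟨j, inv (biproduct.ι Z i ≫ (𝟙 _ - g) ≫ biproduct.π Z j) ≫ biproduct.ι Z i ≫ (𝟙 _ - g),
    by simp only [Category.assoc, IsIso.inv_hom_id],
    by simp only [Category.assoc, hbf, comp_zero]⟩

lemma rightEquiv_fromSubtype_ne_comp {ι : Type} [Fintype ι] [DecidableEq ι] (Z : ι → C)
    {Y : C} (f : ⨁ Z ⟶ Y) {j : ι} (s : Z j ⟶ ⨁ Z) (hs : s ≫ biproduct.π Z j = 𝟙 _)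
    (hsf : s ≫ f = 0) : RightEquiv f (biproduct.fromSubtype Z (· ≠ j) ≫ f) := by
  obtain ⟨t, ht⟩ := KernelFork.IsLimit.lift' (biproduct.isLimitFromSubtype Z j)
    (𝟙 _ - biproduct.π Z j ≫ s) (by simp [hs])
  rw [KernelFork.ι_ofι] at ht
  refine ⟨⟨t, ?_⟩, ⟨_, rfl⟩⟩
  rw [← Category.assoc, ht, Preadditive.sub_comp, Category.assoc, hsf, comp_zero, sub_zero,
    Category.id_comp]

theorem exists_rightMinimal_rightEquiv_of_isLocalRing {ι : Type} [Fintype ι] (Z : ι → C)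
    [∀ i, IsLocalRing (End (Z i))] {Y : C} (f : ⨁ Z ⟶ Y) :
    ∃ (X' : C) (f' : X' ⟶ Y), RightMinimal f' ∧ RightEquiv f f' := by
  classical
  by_cases hf : RightMinimal f
  · exact ⟨_, f, hf, .refl f⟩
  obtain ⟨j, s, hs, hsf⟩ := exists_section_π_comp_eq_zero_of_not_rightMinimal Z hf
  have : ∀ l : {l // l ≠ j}, IsLocalRing (End (Subtype.restrict _ Z l)) := fun l =>
    inferInstanceAs (IsLocalRing (End (Z l)))
  obtain ⟨X', f', hf', hequiv⟩ :=
    exists_rightMinimal_rightEquiv_of_isLocalRing (Subtype.restrict (· ≠ j) Z)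
      (biproduct.fromSubtype Z (· ≠ j) ≫ f)
  exact ⟨X', f', hf', (rightEquiv_fromSubtype_ne_comp Z f s hs hsf).trans hequiv⟩
termination_by Fintype.card ι
decreasing_by classical exact Fintype.card_subtype_lt (p := (· ≠ j)) (x := j) (by simp)

end KrullSchmidt

section Statement

variable (k : Type u') [CommRing k] [IsArtinianRing k]
variable [Preadditive C] [CategoryTheory.Linear k C] [HasFiniteBiproducts C]
variable [∀ X Y : C, Module.Finite k (X ⟶ Y)] [KrullSchmidtCat C]

theorem stmt_19 {X Y : C} (f : X ⟶ Y) :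
    ∃ (X' : C) (f' : X' ⟶ Y), RightMinimal f' ∧ RightEquiv f f' := by
  obtain ⟨n, Z, hZ, ⟨α⟩⟩ := KrullSchmidtCat.decomp X
  obtain ⟨X', f', hf', hequiv⟩ := exists_rightMinimal_rightEquiv_of_isLocalRing Z (α.inv ≫ f)
  exact ⟨X', f', hf', (RightEquiv.inv_comp α f).trans hequiv⟩

end Statement
end
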